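/- For a DMZIC with weak interference, define the region C as the union, over all joint distributions of the form p(q)p(x1|q)p(u2|q)p(x2|u2,q) (with Q and U2 finite-valued auxiliary random variables) with (Y1,Y2) the channel output, of the set of nonnegative pairs (R1,R2) satisfying R1 <= I(X1;Y1|U2,Q), R2 <= I(X2;Y2|Q), and R1+R2 <= I(U2,X1;Y1|Q) + I(X2;Y2|U2,Q). Define the region E as the union over the same class of distributions of the set of nonnegative pairs (R1,R2) satisfying R1 <= I(X1;Y1|U2,Q) and R2 <= I(U2;Y1|Q) + I(X2;Y2|U2,Q). Then C = E. -/

import Mathlib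

/-!
Conditioned on `Q`, weak interference yields two information inequalities. Since `U2 - X2 - Y2`,
`I(X2;Y2|Q) = I(U2;Y2|Q) + I(X2;Y2|U2,Q)`; and since `U2` is independent of `X1` while `Y1` is
produced from `(X1, Y2)` alone, `I(U2;Y1|Q) ≤ I(U2;Y1|X1,Q) ≤ I(U2;Y2|X1,Q) = I(U2;Y2|Q)`.
Together they show that every point of `E` satisfies the `R2` and sum-rate constraints of `C`
under the same distribution, and that `I(U2,X1;Y1|Q) + I(X2;Y2|U2,Q) ≤ I(X1;Y1|Q) + I(X2;Y2|Q)`.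

Conversely, a point of `C` is reached in `E` by time sharing between the given scheme and the
scheme in which `U2` is constant. The latter turns the `R2` bound of `E` into `I(X2;Y2|Q)` and the
`R1` bound into `I(X1;Y1|Q)`; the inequality above keeps `R1` admissible along the way.
-/

open scoped BigOperators

noncomputable section

namespace IT

/-- A probability mass function on a finite type. -/
def IsPMF {α : Type*} [Fintype α] (p : α → ℝ) : Prop :=
  (∀ a, 0 ≤ p a) ∧ ∑ a, p a = 1

/-- The distribution (pushforward) of a random variable `X` under the pmf `μ`
on the sample space `Ω`. -/
def distOf {Ω α : Type*} [Fintype Ω] [DecidableEq α] (μ : Ω → ℝ) (X : Ω → α) : α → ℝ :=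
  fun a => ∑ ω, if X ω = a then μ ω else 0

/-- Shannon entropy (base-2 logarithms) of a pmf on a finite type.
(Recall `Real.logb 2 0 = 0`, so the `0 log 0 = 0` convention is automatic.) -/
def ent {α : Type*} [Fintype α] (p : α → ℝ) : ℝ := -∑ a, p a * Real.logb 2 (p a)

/-- Entropy `H(X)` of a finite-valued random variable `X` on `(Ω, μ)`. -/
def H {Ω α : Type*} [Fintype Ω] [Fintype α] [DecidableEq α] (μ : Ω → ℝ) (X : Ω → α) : ℝ :=
  ent (distOf μ X)

/-- Mutual information `I(X;Y)`. -/
def MI {Ω α β : Type*} [Fintype Ω] [Fintype α] [DecidableEq α] [Fintype β] [DecidableEq β]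
    (μ : Ω → ℝ) (X : Ω → α) (Y : Ω → β) : ℝ :=
  H μ X + H μ Y - H μ (fun ω => (X ω, Y ω))

/-- Conditional mutual information `I(X;Y|Z)`. -/
def CMI {Ω α β γ : Type*} [Fintype Ω] [Fintype α] [DecidableEq α] [Fintype β] [DecidableEq β]
    [Fintype γ] [DecidableEq γ] (μ : Ω → ℝ) (X : Ω → α) (Y : Ω → β) (Z : Ω → γ) : ℝ :=
  H μ (fun ω => (X ω, Z ω)) + H μ (fun ω => (Y ω, Z ω))
    - H μ (fun ω => (X ω, Y ω, Z ω)) - H μ Z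

/-- `B` is conditionally independent of `A` given `C` (a Markov chain `A - C - B`). -/
def CondIndep {Ω α β γ : Type*} [Fintype Ω] [DecidableEq α] [DecidableEq β] [DecidableEq γ]
    (μ : Ω → ℝ) (A : Ω → α) (B : Ω → β) (C : Ω → γ) : Prop :=
  ∀ a b c,
    distOf μ (fun ω => (A ω, B ω, C ω)) (a, b, c) * distOf μ C c =
      distOf μ (fun ω => (A ω, C ω)) (a, c) * distOf μ (fun ω => (B ω, C ω)) (b, c)

variable {A1 A2 B1 B2 : Type*}

/-- A discrete memoryless interference channel with input alphabets `A1, A2` and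
output alphabets `B1, B2`: every pair of inputs yields a pmf on output pairs. -/
def IsChannel [Fintype B1] [Fintype B2] (W : A1 → A2 → B1 × B2 → ℝ) : Prop :=
  ∀ x1 x2, IsPMF (W x1 x2)

/-- DMZIC with weak interference: the transition probability factorizes as
`p(y1,y2|x1,x2) = p(y2|x2) q(y1|x1,y2)`, i.e. one-sided interference together with
the Markov chain `X2 - (X1,Y2) - Y1`. -/
def WeakZ [Fintype B1] [Fintype B2] (W : A1 → A2 → B1 × B2 → ℝ) : Prop :=
  ∃ (p2 : A2 → B2 → ℝ) (q : A1 → B2 → B1 → ℝ),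
    (∀ x2, IsPMF (p2 x2)) ∧ (∀ x1 y2, IsPMF (q x1 y2)) ∧
      ∀ x1 x2 y1 y2, W x1 x2 (y1, y2) = p2 x2 y2 * q x1 y2 y1

/-- Factorization `p(y1,y2|x1,x2) = p(y2|x1,x2) q(y1|x1,y2)`, i.e. the Markov chain
`X2 - (X1,Y2) - Y1`. -/
def ChainX2X1Y2Y1 [Fintype B1] [Fintype B2] (W : A1 → A2 → B1 × B2 → ℝ) : Prop :=
  ∃ (pa : A1 → A2 → B2 → ℝ) (q : A1 → B2 → B1 → ℝ),
    (∀ x1 x2, IsPMF (pa x1 x2)) ∧ (∀ x1 y2, IsPMF (q x1 y2)) ∧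
      ∀ x1 x2 y1 y2, W x1 x2 (y1, y2) = pa x1 x2 y2 * q x1 y2 y1

/-- The `n`-fold memoryless extension of the channel `W`. -/
def nFold (W : A1 → A2 → B1 × B2 → ℝ) (n : ℕ) (a : Fin n → A1) (b : Fin n → A2)
    (y : (Fin n → B1) × (Fin n → B2)) : ℝ :=
  ∏ i, W (a i) (b i) (y.1 i, y.2 i)

/-- An `(n, M1, M2)` code for the interference channel. -/
structure Code (A1 A2 B1 B2 : Type*) (n M1 M2 : ℕ) where
  enc1 : Fin M1 → Fin n → A1
  enc2 : Fin M2 → Fin n → A2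
  dec1 : (Fin n → B1) → Fin M1
  dec2 : (Fin n → B2) → Fin M2

/-- Average probability of error at receiver 1 (messages uniform and independent). -/
def err1 [Fintype B1] [Fintype B2] (W : A1 → A2 → B1 × B2 → ℝ) {n M1 M2 : ℕ}
    (c : Code A1 A2 B1 B2 n M1 M2) : ℝ :=
  ((M1 : ℝ) * (M2 : ℝ))⁻¹ *
    ∑ w1 : Fin M1, ∑ w2 : Fin M2, ∑ y : (Fin n → B1) × (Fin n → B2),
      if c.dec1 y.1 ≠ w1 then nFold W n (c.enc1 w1) (c.enc2 w2) y else 0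

/-- Average probability of error at receiver 2 (messages uniform and independent). -/
def err2 [Fintype B1] [Fintype B2] (W : A1 → A2 → B1 × B2 → ℝ) {n M1 M2 : ℕ}
    (c : Code A1 A2 B1 B2 n M1 M2) : ℝ :=
  ((M1 : ℝ) * (M2 : ℝ))⁻¹ *
    ∑ w1 : Fin M1, ∑ w2 : Fin M2, ∑ y : (Fin n → B1) × (Fin n → B2),
      if c.dec2 y.2 ≠ w2 then nFold W n (c.enc1 w1) (c.enc2 w2) y else 0

/-- A (nonnegative) rate pair `(R1, R2)` is achievable if there are codes of blocklength `n`,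
with at least `2 ^ (n R1)` and `2 ^ (n R2)` messages, whose average error probabilities at
the two receivers can be made arbitrarily small. -/
def Achievable [Fintype B1] [Fintype B2] (W : A1 → A2 → B1 × B2 → ℝ) (R1 R2 : ℝ) : Prop :=
  0 ≤ R1 ∧ 0 ≤ R2 ∧ ∀ ε : ℝ, 0 < ε →
    ∃ (n M1 M2 : ℕ) (c : Code A1 A2 B1 B2 n M1 M2), 0 < n ∧
      (2 : ℝ) ^ ((n : ℝ) * R1) ≤ (M1 : ℝ) ∧ (2 : ℝ) ^ ((n : ℝ) * R2) ≤ (M2 : ℝ) ∧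
      err1 W c ≤ ε ∧ err2 W c ≤ ε

/-- The sum-rate capacity: the supremum of `R1 + R2` over achievable rate pairs. -/
def sumCapacity [Fintype B1] [Fintype B2] (W : A1 → A2 → B1 × B2 → ℝ) : ℝ :=
  sSup {r : ℝ | ∃ R1 R2 : ℝ, Achievable W R1 R2 ∧ r = R1 + R2}

/-- The capacity region: the closure of the set of achievable rate pairs. -/
def capacityRegion [Fintype B1] [Fintype B2] (W : A1 → A2 → B1 × B2 → ℝ) : Set (ℝ × ℝ) :=
  closure {p : ℝ × ℝ | Achievable W p.1 p.2}

/-- The joint pmf of `(X1, X2, Y1, Y2)` when the product input `p1 × p2` is fed to `W`. -/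
def jointOf (W : A1 → A2 → B1 × B2 → ℝ) (p1 : A1 → ℝ) (p2 : A2 → ℝ) :
    A1 × A2 × B1 × B2 → ℝ :=
  fun z => p1 z.1 * p2 z.2.1 * W z.1 z.2.1 (z.2.2.1, z.2.2.2)

/-- Coordinate projections on `A1 × A2 × B1 × B2`. -/
def pX1 : A1 × A2 × B1 × B2 → A1 := fun z => z.1
def pX2 : A1 × A2 × B1 × B2 → A2 := fun z => z.2.1
def pY1 : A1 × A2 × B1 × B2 → B1 := fun z => z.2.2.1
def pY2 : A1 × A2 × B1 × B2 → B2 := fun z => z.2.2.2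

/-- The binary entropy function (base-2 logarithms). -/
def h2 (t : ℝ) : ℝ := -(t * Real.logb 2 t) - (1 - t) * Real.logb 2 (1 - t)

end IT

namespace IT

/-- Joint pmf of `(Q, U2, X1, X2, Y1, Y2)` for input factorization
`p(q) p(x1|q) p(u2|q) p(x2|u2,q)` fed to the channel `W`. -/
def mu4 {A1 A2 B1 B2 Q U2 : Type} (W : A1 → A2 → B1 × B2 → ℝ)
    (pQ : Q → ℝ) (pX1c : Q → A1 → ℝ) (pU2c : Q → U2 → ℝ) (pX2c : Q → U2 → A2 → ℝ) :
    Q × U2 × A1 × A2 × B1 × B2 → ℝ :=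
  fun z => pQ z.1 * pX1c z.1 z.2.2.1 * pU2c z.1 z.2.1 * pX2c z.1 z.2.1 z.2.2.2.1 *
    W z.2.2.1 z.2.2.2.1 (z.2.2.2.2.1, z.2.2.2.2.2)

/-- The region `C` (Han–Kobayashi-type achievable region for the DMZIC). -/
def regionC {A1 A2 B1 B2 : Type} [Fintype A1] [DecidableEq A1] [Fintype A2] [DecidableEq A2]
    [Fintype B1] [DecidableEq B1] [Fintype B2] [DecidableEq B2] (W : A1 → A2 → B1 × B2 → ℝ) : Set (ℝ × ℝ) :=
  {r | ∃ (Q U2 : Type) (_ : Fintype Q) (_ : DecidableEq Q) (_ : Fintype U2)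
      (_ : DecidableEq U2) (pQ : Q → ℝ) (pX1c : Q → A1 → ℝ) (pU2c : Q → U2 → ℝ)
      (pX2c : Q → U2 → A2 → ℝ),
      IsPMF pQ ∧ (∀ q, IsPMF (pX1c q)) ∧ (∀ q, IsPMF (pU2c q)) ∧
        (∀ q u, IsPMF (pX2c q u)) ∧
      0 ≤ r.1 ∧ 0 ≤ r.2 ∧
      r.1 ≤ CMI (mu4 W pQ pX1c pU2c pX2c)
              (fun z => z.2.2.1) (fun z => z.2.2.2.2.1) (fun z => (z.2.1, z.1)) ∧
      r.2 ≤ CMI (mu4 W pQ pX1c pU2c pX2c)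
              (fun z => z.2.2.2.1) (fun z => z.2.2.2.2.2) (fun z => z.1) ∧
      r.1 + r.2 ≤
        CMI (mu4 W pQ pX1c pU2c pX2c)
            (fun z => (z.2.1, z.2.2.1)) (fun z => z.2.2.2.2.1) (fun z => z.1)
          + CMI (mu4 W pQ pX1c pU2c pX2c)
              (fun z => z.2.2.2.1) (fun z => z.2.2.2.2.2) (fun z => (z.2.1, z.1))}

/-- The region `E` (simpler description). -/
def regionE {A1 A2 B1 B2 : Type} [Fintype A1] [DecidableEq A1] [Fintype A2] [DecidableEq A2]
    [Fintype B1] [DecidableEq B1] [Fintype B2] [DecidableEq B2] (W : A1 → A2 → B1 × B2 → ℝ) : Set (ℝ × ℝ) :=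
  {r | ∃ (Q U2 : Type) (_ : Fintype Q) (_ : DecidableEq Q) (_ : Fintype U2)
      (_ : DecidableEq U2) (pQ : Q → ℝ) (pX1c : Q → A1 → ℝ) (pU2c : Q → U2 → ℝ)
      (pX2c : Q → U2 → A2 → ℝ),
      IsPMF pQ ∧ (∀ q, IsPMF (pX1c q)) ∧ (∀ q, IsPMF (pU2c q)) ∧
        (∀ q u, IsPMF (pX2c q u)) ∧
      0 ≤ r.1 ∧ 0 ≤ r.2 ∧
      r.1 ≤ CMI (mu4 W pQ pX1c pU2c pX2c)
              (fun z => z.2.2.1) (fun z => z.2.2.2.2.1) (fun z => (z.2.1, z.1)) ∧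
      r.2 ≤ CMI (mu4 W pQ pX1c pU2c pX2c)
              (fun z => z.2.1) (fun z => z.2.2.2.2.1) (fun z => z.1)
          + CMI (mu4 W pQ pX1c pU2c pX2c)
              (fun z => z.2.2.2.1) (fun z => z.2.2.2.2.2) (fun z => (z.2.1, z.1))}

section Distribution

variable {Ω Ω' α β γ : Type*} [Fintype Ω] [DecidableEq α] [DecidableEq β] [DecidableEq γ]

lemma distOf_nonneg {μ : Ω → ℝ} (hμ : ∀ ω, 0 ≤ μ ω) (X : Ω → α) (a : α) :
    0 ≤ distOf μ X a :=
  Finset.sum_nonneg fun ω _ => by split_ifs <;> simp [hμ ω]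

lemma distOf_apply_eq_sum_mul (μ : Ω → ℝ) (X : Ω → α) (a : α) :
    distOf μ X a = ∑ ω, μ ω * if X ω = a then 1 else 0 := by
  simp [distOf, mul_ite]

lemma sum_mul_comp_eq_sum_distOf_mul [Fintype α] (μ : Ω → ℝ) (X : Ω → α) (f : α → ℝ) :
    ∑ ω, μ ω * f (X ω) = ∑ a, distOf μ X a * f a := by
  simp only [distOf, ite_mul, zero_mul, Finset.sum_mul]
  rw [Finset.sum_comm]
  simp

lemma sum_distOf [Fintype α] (μ : Ω → ℝ) (X : Ω → α) : ∑ a, distOf μ X a = ∑ ω, μ ω := by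
  simpa using (sum_mul_comp_eq_sum_distOf_mul μ X fun _ => 1).symm

lemma exists_eq_of_distOf_ne_zero {μ : Ω → ℝ} {X : Ω → α} {a : α} (h : distOf μ X a ≠ 0) :
    ∃ ω, X ω = a ∧ μ ω ≠ 0 := by
  obtain ⟨ω, -, hω⟩ := Finset.exists_ne_zero_of_sum_ne_zero h
  exact ⟨ω, by split_ifs at hω with hX <;> simp_all⟩

/-- `distOf μ σ` is also the push-forward of `μ` along `σ`, as a weight function on `Ω'`. -/
lemma distOf_distOf [Fintype Ω'] [DecidableEq Ω'] (μ : Ω → ℝ) (σ : Ω → Ω') (X : Ω' → α) :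
    distOf (distOf μ σ) X = distOf μ (X ∘ σ) := by
  ext a
  rw [distOf_apply_eq_sum_mul, ← sum_mul_comp_eq_sum_distOf_mul, distOf_apply_eq_sum_mul]
  rfl

lemma distOf_mul_left (c : ℝ) (μ : Ω → ℝ) (X : Ω → α) (a : α) :
    distOf (fun ω => c * μ ω) X a = c * distOf μ X a := by
  simp only [distOf_apply_eq_sum_mul, mul_assoc, Finset.mul_sum]

lemma distOf_add (μ ν : Ω → ℝ) (X : Ω → α) (a : α) :
    distOf (fun ω => μ ω + ν ω) X a = distOf μ X a + distOf ν X a := by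
  simp only [distOf_apply_eq_sum_mul, add_mul, Finset.sum_add_distrib]

lemma distOf_le_distOf_comp {μ : Ω → ℝ} (hμ : ∀ ω, 0 ≤ μ ω) (X : Ω → α) (f : α → β) (a : α) :
    distOf μ X a ≤ distOf μ (fun ω => f (X ω)) (f a) :=
  Finset.sum_le_sum fun ω _ => by
    by_cases h : X ω = a
    · simp [h]
    · split_ifs <;> simp [hμ ω]

lemma distOf_pair_eq_sum_left [Fintype β] (μ : Ω → ℝ) (X : Ω → α) (Y : Ω → β) (Z : Ω → γ)
    (a : α) (c : γ) :
    distOf μ (fun ω => (X ω, Z ω)) (a, c) =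
      ∑ b, distOf μ (fun ω => (X ω, Y ω, Z ω)) (a, b, c) := by
  simp only [distOf]
  rw [Finset.sum_comm]
  exact Finset.sum_congr rfl fun ω _ => by simp [Prod.ext_iff, ite_and, Finset.sum_ite_eq]

lemma distOf_pair_eq_sum_mid [Fintype α] (μ : Ω → ℝ) (X : Ω → α) (Y : Ω → β) (Z : Ω → γ)
    (b : β) (c : γ) :
    distOf μ (fun ω => (Y ω, Z ω)) (b, c) =
      ∑ a, distOf μ (fun ω => (X ω, Y ω, Z ω)) (a, b, c) := by
  simp only [distOf]
  rw [Finset.sum_comm]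
  exact Finset.sum_congr rfl fun ω _ => by simp [Prod.ext_iff, ite_and, Finset.sum_ite_eq]

lemma distOf_eq_sum_pair [Fintype α] (μ : Ω → ℝ) (X : Ω → α) (Z : Ω → γ) (c : γ) :
    distOf μ Z c = ∑ a, distOf μ (fun ω => (X ω, Z ω)) (a, c) := by
  simp only [distOf]
  rw [Finset.sum_comm]
  exact Finset.sum_congr rfl fun ω _ => by simp [Prod.ext_iff, ite_and, Finset.sum_ite_eq]

end Distribution

section Entropy

variable {Ω Ω' α β : Type*} [Fintype Ω] [Fintype α] [DecidableEq α] [Fintype β] [DecidableEq β]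

lemma H_eq_neg_sum (μ : Ω → ℝ) (X : Ω → α) :
    H μ X = -∑ ω, μ ω * Real.logb 2 (distOf μ X (X ω)) := by
  rw [H, ent, sum_mul_comp_eq_sum_distOf_mul μ X fun a => Real.logb 2 (distOf μ X a)]

lemma H_congr {μ : Ω → ℝ} {X : Ω → α} {Y : Ω → β} (h : ∀ ω ω', X ω = X ω' ↔ Y ω = Y ω') :
    H μ X = H μ Y := by
  have hdist : ∀ ω, distOf μ X (X ω) = distOf μ Y (Y ω) := fun ω =>
    Finset.sum_congr rfl fun ω' _ => by simp only [h ω' ω]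
  simp only [H_eq_neg_sum, hdist]

lemma H_distOf [Fintype Ω'] [DecidableEq Ω'] (μ : Ω → ℝ) (σ : Ω → Ω') (X : Ω' → α) :
    H (distOf μ σ) X = H μ (X ∘ σ) := by
  rw [H, H, distOf_distOf]

/-- No sign condition on `c` is needed: `Real.logb` is even and vanishes at `0`. -/
lemma H_mul_left (c : ℝ) (μ : Ω → ℝ) (X : Ω → α) :
    H (fun ω => c * μ ω) X = c * H μ X - c * Real.logb 2 c * ∑ ω, μ ω := by
  have hterm : ∀ a, c * distOf μ X a * Real.logb 2 (c * distOf μ X a) =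
      c * (distOf μ X a * Real.logb 2 (distOf μ X a)) + c * Real.logb 2 c * distOf μ X a := by
    intro a
    rcases eq_or_ne c 0 with rfl | hc
    · simp
    rcases eq_or_ne (distOf μ X a) 0 with hp | hp
    · simp [hp]
    rw [Real.logb_mul hc hp]
    ring
  simp only [H, ent, distOf_mul_left, hterm, Finset.sum_add_distrib, ← Finset.mul_sum,
    sum_distOf]
  ring

lemma H_add_of_disjoint {μ ν : Ω → ℝ} {X : Ω → α}
    (hsep : ∀ ω ω', μ ω ≠ 0 → ν ω' ≠ 0 → X ω ≠ X ω') :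
    H (fun ω => μ ω + ν ω) X = H μ X + H ν X := by
  have hdisj : ∀ a, distOf μ X a = 0 ∨ distOf ν X a = 0 := by
    by_contra! h
    obtain ⟨a, hμa, hνa⟩ := h
    obtain ⟨ω, rfl, hω⟩ := exists_eq_of_distOf_ne_zero hμa
    obtain ⟨ω', hω'X, hω'⟩ := exists_eq_of_distOf_ne_zero hνa
    exact hsep ω ω' hω hω' hω'X.symm
  simp only [H, ent, distOf_add, ← neg_add, ← Finset.sum_add_distrib]
  congr 1
  exact Finset.sum_congr rfl fun a _ => by rcases hdisj a with h | h <;> simp [h]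

end Entropy

lemma sum_mul_logb_sub_logb_nonneg {ι : Type*} [Fintype ι] {p q : ι → ℝ}
    (hp : ∀ i, 0 ≤ p i) (hq : ∀ i, 0 ≤ q i) (hpq : ∀ i, p i ≠ 0 → q i ≠ 0)
    (hsum : ∑ i, q i ≤ ∑ i, p i) :
    0 ≤ ∑ i, p i * (Real.logb 2 (p i) - Real.logb 2 (q i)) := by
  have hterm : ∀ i, p i - q i ≤ p i * (Real.log (p i) - Real.log (q i)) := by
    intro i
    rcases (hp i).eq_or_lt with h0 | hpos
    · simp [← h0, hq i]
    have hqpos := (hq i).lt_of_ne' (hpq i hpos.ne')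
    have h := mul_le_mul_of_nonneg_left
      (Real.log_le_sub_one_of_pos (div_pos hqpos hpos)) hpos.le
    rw [Real.log_div hqpos.ne' hpos.ne', mul_sub, mul_sub, mul_one,
      mul_div_cancel₀ _ hpos.ne'] at h
    linarith
  have hlog2 := Real.log_pos one_lt_two
  calc (0 : ℝ) ≤ (∑ i, (p i - q i)) / Real.log 2 := by
        rw [Finset.sum_sub_distrib]
        exact div_nonneg (sub_nonneg.2 hsum) hlog2.le
    _ ≤ (∑ i, p i * (Real.log (p i) - Real.log (q i))) / Real.log 2 := by
        gcongr with i
        exact hterm i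
    _ = _ := by simp only [Real.logb, Finset.sum_div, ← sub_div, mul_div_assoc]

section CondMutualInfo

variable {Ω Ω' α β γ δ : Type*} [Fintype Ω] [Fintype α] [DecidableEq α] [Fintype β]
  [DecidableEq β] [Fintype γ] [DecidableEq γ] [Fintype δ] [DecidableEq δ]

lemma CMI_eq_sum (μ : Ω → ℝ) (X : Ω → α) (Y : Ω → β) (Z : Ω → γ) :
    CMI μ X Y Z = ∑ t : α × β × γ, distOf μ (fun ω => (X ω, Y ω, Z ω)) t *
      (Real.logb 2 (distOf μ (fun ω => (X ω, Y ω, Z ω)) t) + Real.logb 2 (distOf μ Z t.2.2)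
        - Real.logb 2 (distOf μ (fun ω => (X ω, Z ω)) (t.1, t.2.2))
        - Real.logb 2 (distOf μ (fun ω => (Y ω, Z ω)) (t.2.1, t.2.2))) := by
  simp only [mul_add, mul_sub, Finset.sum_add_distrib, Finset.sum_sub_distrib,
    ← sum_mul_comp_eq_sum_distOf_mul, CMI, H_eq_neg_sum]
  ring

/-- Gibbs' inequality against `q(x,y,z) = p(x,z) p(y,z) / p(z)`, whose total mass is that of `μ`. -/
lemma CMI_nonneg {μ : Ω → ℝ} (hμ : ∀ ω, 0 ≤ μ ω) (X : Ω → α) (Y : Ω → β) (Z : Ω → γ) :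
    0 ≤ CMI μ X Y Z := by
  rw [CMI_eq_sum]
  set p := distOf μ (fun ω => (X ω, Y ω, Z ω))
  set pXZ := distOf μ (fun ω => (X ω, Z ω))
  set pYZ := distOf μ (fun ω => (Y ω, Z ω))
  set pZ := distOf μ Z
  have hp : ∀ t, 0 ≤ p t := distOf_nonneg hμ _
  have hpos : ∀ t, p t ≠ 0 → 0 < pXZ (t.1, t.2.2) ∧ 0 < pYZ (t.2.1, t.2.2) ∧ 0 < pZ t.2.2 := by
    intro t ht
    have hpt := (hp t).lt_of_ne' ht
    exact ⟨hpt.trans_le (distOf_le_distOf_comp hμ _ (fun t => (t.1, t.2.2)) t),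
      hpt.trans_le (distOf_le_distOf_comp hμ _ (fun t => (t.2.1, t.2.2)) t),
      hpt.trans_le (distOf_le_distOf_comp hμ _ (fun t => t.2.2) t)⟩
  let q : α × β × γ → ℝ := fun t => pXZ (t.1, t.2.2) * pYZ (t.2.1, t.2.2) / pZ t.2.2
  have hq : ∀ t, 0 ≤ q t := fun t =>
    div_nonneg (mul_nonneg (distOf_nonneg hμ _ _) (distOf_nonneg hμ _ _)) (distOf_nonneg hμ _ _)
  have hsum : ∑ t, q t = ∑ t, p t := calc
    ∑ t, q t = ∑ c, (∑ a, pXZ (a, c)) * (∑ b, pYZ (b, c)) / pZ c := by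
      simp only [q, Fintype.sum_prod_type, Finset.sum_mul, Finset.mul_sum, Finset.sum_div]
      exact (Finset.sum_congr rfl fun _ _ => Finset.sum_comm).trans
        (Finset.sum_comm.trans (Finset.sum_congr rfl fun _ _ => Finset.sum_comm))
    _ = ∑ c, pZ c * pZ c / pZ c := by simp only [pXZ, pYZ, pZ, ← distOf_eq_sum_pair]
    _ = ∑ t, p t := by simp only [mul_self_div_self, p, pZ, sum_distOf]
  have hterm : ∀ t, p t * (Real.logb 2 (p t) + Real.logb 2 (pZ t.2.2)
      - Real.logb 2 (pXZ (t.1, t.2.2)) - Real.logb 2 (pYZ (t.2.1, t.2.2))) =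
        p t * (Real.logb 2 (p t) - Real.logb 2 (q t)) := by
    intro t
    rcases eq_or_ne (p t) 0 with h0 | h0
    · simp [h0]
    obtain ⟨h1, h2, h3⟩ := hpos t h0
    simp only [q, Real.logb_div (mul_pos h1 h2).ne' h3.ne', Real.logb_mul h1.ne' h2.ne']
    ring
  simp only [hterm]
  refine sum_mul_logb_sub_logb_nonneg hp hq (fun t ht => ?_) hsum.le
  obtain ⟨h1, h2, h3⟩ := hpos t ht
  exact div_ne_zero (mul_ne_zero h1.ne' h2.ne') h3.ne'

lemma CMI_eq_zero_of_factor {μ : Ω → ℝ} (hμ : ∀ ω, 0 ≤ μ ω) {X : Ω → α} {Y : Ω → β} {Z : Ω → γ}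
    (f : α → γ → ℝ) (g : β → γ → ℝ) (hf : ∀ a c, 0 ≤ f a c) (hg : ∀ b c, 0 ≤ g b c)
    (hfac : ∀ a b c, distOf μ (fun ω => (X ω, Y ω, Z ω)) (a, b, c) = f a c * g b c) :
    CMI μ X Y Z = 0 := by
  rw [CMI_eq_sum]
  refine Finset.sum_eq_zero fun ⟨a, b, c⟩ _ => ?_
  rcases eq_or_ne (distOf μ (fun ω => (X ω, Y ω, Z ω)) (a, b, c)) 0 with h0 | h0
  · rw [h0, zero_mul]
  have hpos := (distOf_nonneg hμ _ _).lt_of_ne' h0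
  rw [hfac] at hpos
  have hfa : 0 < f a c := (hf a c).lt_of_ne fun h => by simp [← h] at hpos
  have hgb : 0 < g b c := (hg b c).lt_of_ne fun h => by simp [← h] at hpos
  have hF : 0 < ∑ a', f a' c :=
    hfa.trans_le (Finset.single_le_sum (fun a' _ => hf a' c) (Finset.mem_univ a))
  have hG : 0 < ∑ b', g b' c :=
    hgb.trans_le (Finset.single_le_sum (fun b' _ => hg b' c) (Finset.mem_univ b))
  have hXZ : ∀ a', distOf μ (fun ω => (X ω, Z ω)) (a', c) = f a' c * ∑ b', g b' c := by
    simp only [distOf_pair_eq_sum_left μ X Y Z, hfac, Finset.mul_sum, implies_true]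
  have hYZ : distOf μ (fun ω => (Y ω, Z ω)) (b, c) = (∑ a', f a' c) * g b c := by
    simp only [distOf_pair_eq_sum_mid μ X Y Z, hfac, Finset.sum_mul]
  have hZ : distOf μ Z c = (∑ a', f a' c) * ∑ b', g b' c := by
    simp only [distOf_eq_sum_pair μ X Z, hXZ, Finset.sum_mul]
  simp only [hfac, hXZ, hYZ, hZ, Real.logb_mul hfa.ne' hgb.ne', Real.logb_mul hF.ne' hG.ne',
    Real.logb_mul hfa.ne' hG.ne', Real.logb_mul hF.ne' hgb.ne']
  ring

lemma CMI_congr {α' β' γ' : Type*} [Fintype α'] [DecidableEq α'] [Fintype β'] [DecidableEq β']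
    [Fintype γ'] [DecidableEq γ'] {μ : Ω → ℝ} {X : Ω → α} {Y : Ω → β} {Z : Ω → γ}
    {X' : Ω → α'} {Y' : Ω → β'} {Z' : Ω → γ'}
    (hX : ∀ ω ω', X ω = X ω' ↔ X' ω = X' ω') (hY : ∀ ω ω', Y ω = Y ω' ↔ Y' ω = Y' ω')
    (hZ : ∀ ω ω', Z ω = Z ω' ↔ Z' ω = Z' ω') :
    CMI μ X Y Z = CMI μ X' Y' Z' := by
  unfold CMI
  rw [H_congr (X := fun ω => (X ω, Z ω)) (Y := fun ω => (X' ω, Z' ω)) (by simp [hX, hZ]),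
    H_congr (X := fun ω => (Y ω, Z ω)) (Y := fun ω => (Y' ω, Z' ω)) (by simp [hY, hZ]),
    H_congr (X := fun ω => (X ω, Y ω, Z ω)) (Y := fun ω => (X' ω, Y' ω, Z' ω))
      (by simp [hX, hY, hZ]),
    H_congr hZ]

lemma CMI_comm (μ : Ω → ℝ) (X : Ω → α) (Y : Ω → β) (Z : Ω → γ) :
    CMI μ X Y Z = CMI μ Y X Z := by
  unfold CMI
  rw [H_congr (X := fun ω => (X ω, Y ω, Z ω)) (Y := fun ω => (Y ω, X ω, Z ω))
    (fun ω ω' => by simp; tauto)]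
  ring

lemma CMI_pair_left (μ : Ω → ℝ) (U : Ω → α) (X : Ω → β) (Y : Ω → γ) (Z : Ω → δ) :
    CMI μ (fun ω => (U ω, X ω)) Y Z = CMI μ U Y Z + CMI μ X Y (fun ω => (U ω, Z ω)) := by
  unfold CMI
  rw [H_congr (X := fun ω => ((U ω, X ω), Z ω)) (Y := fun ω => (X ω, U ω, Z ω))
      (fun ω ω' => by simp; tauto),
    H_congr (X := fun ω => ((U ω, X ω), Y ω, Z ω)) (Y := fun ω => (X ω, Y ω, U ω, Z ω))
      (fun ω ω' => by simp; tauto),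
    H_congr (X := fun ω => (U ω, Y ω, Z ω)) (Y := fun ω => (Y ω, U ω, Z ω))
      (fun ω ω' => by simp; tauto)]
  ring

lemma CMI_pair_right (μ : Ω → ℝ) (X : Ω → α) (Y : Ω → β) (V : Ω → γ) (Z : Ω → δ) :
    CMI μ X (fun ω => (Y ω, V ω)) Z = CMI μ X Y Z + CMI μ X V (fun ω => (Y ω, Z ω)) := by
  rw [CMI_comm, CMI_pair_left, CMI_comm μ Y, CMI_comm μ V]

lemma CMI_pair_left_comm (μ : Ω → ℝ) (X : Ω → α) (V : Ω → β) (Y : Ω → γ) (Z : Ω → δ) :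
    CMI μ (fun ω => (X ω, V ω)) Y Z = CMI μ (fun ω => (V ω, X ω)) Y Z :=
  CMI_congr (fun ω ω' => by simp [and_comm]) (fun _ _ => Iff.rfl) (fun _ _ => Iff.rfl)

lemma CMI_pair_right_comm (μ : Ω → ℝ) (X : Ω → α) (Y : Ω → β) (V : Ω → γ) (Z : Ω → δ) :
    CMI μ X (fun ω => (Y ω, V ω)) Z = CMI μ X (fun ω => (V ω, Y ω)) Z :=
  CMI_congr (fun _ _ => Iff.rfl) (fun ω ω' => by simp [and_comm]) (fun _ _ => Iff.rfl)

lemma CMI_const_left (μ : Ω → ℝ) (a : α) (Y : Ω → β) (Z : Ω → γ) :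
    CMI μ (fun _ => a) Y Z = 0 := by
  unfold CMI
  rw [H_congr (X := fun ω => (a, Z ω)) (Y := Z) (fun ω ω' => by simp),
    H_congr (X := fun ω => (a, Y ω, Z ω)) (Y := fun ω => (Y ω, Z ω)) (fun ω ω' => by simp)]
  ring

lemma CMI_mul_left (c : ℝ) (μ : Ω → ℝ) (X : Ω → α) (Y : Ω → β) (Z : Ω → γ) :
    CMI (fun ω => c * μ ω) X Y Z = c * CMI μ X Y Z := by
  simp only [CMI, H_mul_left]
  ring

lemma CMI_add_of_disjoint {μ ν : Ω → ℝ} {X : Ω → α} {Y : Ω → β} {Z : Ω → γ}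
    (hsep : ∀ ω ω', μ ω ≠ 0 → ν ω' ≠ 0 → Z ω ≠ Z ω') :
    CMI (fun ω => μ ω + ν ω) X Y Z = CMI μ X Y Z + CMI ν X Y Z := by
  simp only [CMI]
  rw [H_add_of_disjoint fun ω ω' h h' hV => hsep ω ω' h h' (congrArg Prod.snd hV),
    H_add_of_disjoint fun ω ω' h h' hV => hsep ω ω' h h' (congrArg Prod.snd hV),
    H_add_of_disjoint fun ω ω' h h' hV => hsep ω ω' h h' (congrArg (·.2.2) hV),
    H_add_of_disjoint hsep]
  ring

variable [Fintype Ω'] [DecidableEq Ω']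

lemma CMI_distOf (μ : Ω → ℝ) (σ : Ω → Ω') (X : Ω' → α) (Y : Ω' → β) (Z : Ω' → γ) :
    CMI (distOf μ σ) X Y Z = CMI μ (X ∘ σ) (Y ∘ σ) (Z ∘ σ) := by
  simp only [CMI, H_distOf]
  rfl

lemma CMI_distOf_add_distOf (μ₁ μ₀ : Ω → ℝ) (ι₁ ι₀ : Ω → Ω') (X : Ω' → α) (Y : Ω' → β)
    (Z : Ω' → γ) (hsep : ∀ ω ω', Z (ι₁ ω) ≠ Z (ι₀ ω')) :
    CMI (fun ω => distOf μ₁ ι₁ ω + distOf μ₀ ι₀ ω) X Y Z =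
      CMI μ₁ (X ∘ ι₁) (Y ∘ ι₁) (Z ∘ ι₁) + CMI μ₀ (X ∘ ι₀) (Y ∘ ι₀) (Z ∘ ι₀) := by
  rw [CMI_add_of_disjoint, CMI_distOf, CMI_distOf]
  intro ω ω' h h'
  obtain ⟨ω₁, rfl, -⟩ := exists_eq_of_distOf_ne_zero h
  obtain ⟨ω₀, rfl, -⟩ := exists_eq_of_distOf_ne_zero h'
  exact hsep ω₁ ω₀

end CondMutualInfo

section Markov

variable {Ω α β γ δ : Type*} [Fintype Ω] [Fintype α] [DecidableEq α] [Fintype β] [DecidableEq β]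
  [Fintype γ] [DecidableEq γ] [Fintype δ] [DecidableEq δ] {μ : Ω → ℝ}

lemma CMI_le_of_markov (hμ : ∀ ω, 0 ≤ μ ω) {X : Ω → α} {Y : Ω → β} {V : Ω → γ} {Z : Ω → δ}
    (h : CMI μ X Y (fun ω => (V ω, Z ω)) = 0) : CMI μ X Y Z ≤ CMI μ X V Z := by
  have hVY := CMI_pair_right μ X V Y Z
  have hYV := CMI_pair_right μ X Y V Z
  rw [CMI_pair_right_comm] at hVY
  linarith [CMI_nonneg hμ X V (fun ω => (Y ω, Z ω))]

lemma CMI_eq_add_of_markov {U : Ω → α} {X : Ω → β} {Y : Ω → γ} {Z : Ω → δ}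
    (h : CMI μ U Y (fun ω => (X ω, Z ω)) = 0) :
    CMI μ X Y Z = CMI μ U Y Z + CMI μ X Y (fun ω => (U ω, Z ω)) := by
  rw [← CMI_pair_left, CMI_pair_left_comm, CMI_pair_left, h, add_zero]

lemma CMI_le_CMI_of_indep (hμ : ∀ ω, 0 ≤ μ ω) {X : Ω → α} {Y : Ω → β} {V : Ω → γ}
    {Z : Ω → δ} (h : CMI μ X V Z = 0) : CMI μ X Y Z ≤ CMI μ X Y (fun ω => (V ω, Z ω)) := by
  have hVY := CMI_pair_right μ X V Y Z
  rw [CMI_pair_right_comm, CMI_pair_right, h, zero_add] at hVY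
  linarith [CMI_nonneg hμ X V (fun ω => (Y ω, Z ω))]

lemma CMI_cond_eq_of_indep {X : Ω → α} {Y : Ω → β} {V : Ω → γ} {Z : Ω → δ}
    (hV : CMI μ X V Z = 0) (hVY : CMI μ X V (fun ω => (Y ω, Z ω)) = 0) :
    CMI μ X Y (fun ω => (V ω, Z ω)) = CMI μ X Y Z := by
  have h := CMI_pair_right μ X V Y Z
  rw [CMI_pair_right_comm, CMI_pair_right, hV, hVY, zero_add, add_zero] at h
  exact h.symm

theorem weakInterference_bounds {κ υ α₁ α₂ β₁ β₂ : Type*} [Fintype κ] [DecidableEq κ]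
    [Fintype υ] [DecidableEq υ] [Fintype α₁] [DecidableEq α₁] [Fintype α₂] [DecidableEq α₂]
    [Fintype β₁] [DecidableEq β₁] [Fintype β₂] [DecidableEq β₂] (hμ : ∀ ω, 0 ≤ μ ω)
    {Q : Ω → κ} {U : Ω → υ} {X₁ : Ω → α₁} {X₂ : Ω → α₂} {Y₁ : Ω → β₁} {Y₂ : Ω → β₂}
    (hY₂ : CMI μ U Y₂ (fun ω => (X₂ ω, Q ω)) = 0)
    (hY₁ : CMI μ U Y₁ (fun ω => (Y₂ ω, X₁ ω, Q ω)) = 0)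
    (hX₁ : CMI μ U X₁ Q = 0) (hX₁Y₂ : CMI μ U X₁ (fun ω => (Y₂ ω, Q ω)) = 0) :
    CMI μ U Y₁ Q + CMI μ X₂ Y₂ (fun ω => (U ω, Q ω)) ≤ CMI μ X₂ Y₂ Q ∧
      CMI μ (fun ω => (U ω, X₁ ω)) Y₁ Q + CMI μ X₂ Y₂ (fun ω => (U ω, Q ω)) ≤
        CMI μ X₁ Y₁ Q + CMI μ X₂ Y₂ Q := by
  have hB := CMI_eq_add_of_markov hY₂
  have hEF : CMI μ U Y₁ Q ≤ CMI μ U Y₁ (fun ω => (X₁ ω, Q ω)) := CMI_le_CMI_of_indep hμ hX₁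
  have hFG : CMI μ U Y₁ (fun ω => (X₁ ω, Q ω)) ≤ CMI μ U Y₂ Q := by
    rw [← CMI_cond_eq_of_indep hX₁ hX₁Y₂]
    exact CMI_le_of_markov hμ hY₁
  have hS : CMI μ (fun ω => (U ω, X₁ ω)) Y₁ Q =
      CMI μ X₁ Y₁ Q + CMI μ U Y₁ (fun ω => (X₁ ω, Q ω)) := by
    rw [CMI_pair_left_comm, CMI_pair_left]
  constructor <;> linarith

end Markov

section WeakZChannel

variable {A1 A2 B1 B2 : Type*} [Fintype B1] {W : A1 → A2 → B1 × B2 → ℝ}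
  {p2 : A2 → B2 → ℝ} {q : A1 → B2 → B1 → ℝ}

lemma sum_fst_eq_of_factor (hW : ∀ x1 x2 y1 y2, W x1 x2 (y1, y2) = p2 x2 y2 * q x1 y2 y1)
    (hq : ∀ x1 y2, IsPMF (q x1 y2)) (x1 : A1) (x2 : A2) (y2 : B2) :
    ∑ y1, W x1 x2 (y1, y2) = p2 x2 y2 := by
  simp [hW, ← Finset.mul_sum, (hq x1 y2).2]

lemma sum_sum_eq_one_of_factor [Fintype B2]
    (hW : ∀ x1 x2 y1 y2, W x1 x2 (y1, y2) = p2 x2 y2 * q x1 y2 y1)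
    (hp2 : ∀ x2, IsPMF (p2 x2)) (hq : ∀ x1 y2, IsPMF (q x1 y2)) (x1 : A1) (x2 : A2) :
    ∑ y1, ∑ y2, W x1 x2 (y1, y2) = 1 := by
  rw [Finset.sum_comm]
  simp [sum_fst_eq_of_factor hW hq, (hp2 x2).2]

end WeakZChannel

section Mu4

variable {A1 A2 B1 B2 Q U2 : Type} [Fintype A1] [Fintype A2] [Fintype B1] [Fintype B2]
  [Fintype Q] [DecidableEq Q] [Fintype U2] [DecidableEq U2] {W : A1 → A2 → B1 × B2 → ℝ}
  {p2 : A2 → B2 → ℝ} {q : A1 → B2 → B1 → ℝ}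
  {pQ : Q → ℝ} {pX1c : Q → A1 → ℝ} {pU2c : Q → U2 → ℝ} {pX2c : Q → U2 → A2 → ℝ}

/- In the marginal computations below, `simp only [and_comm]` puts the conjunction of coordinate
equations in the order of the nested sums, so that each sum collapses by `Finset.sum_ite_eq`. -/

lemma distOf_mu4_U2_X1_Q [DecidableEq A1]
    (hW : ∀ x1 x2 y1 y2, W x1 x2 (y1, y2) = p2 x2 y2 * q x1 y2 y1)
    (hp2 : ∀ x2, IsPMF (p2 x2)) (hq : ∀ x1 y2, IsPMF (q x1 y2))
    (hpX2 : ∀ c u, IsPMF (pX2c c u)) (u : U2) (x1 : A1) (c : Q) :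
    distOf (mu4 W pQ pX1c pU2c pX2c) (fun z => (z.2.1, z.2.2.1, z.1)) (u, x1, c) =
      pQ c * pU2c c u * pX1c c x1 := by
  simp only [distOf, Fintype.sum_prod_type, Prod.mk.injEq]
  simp only [and_comm]
  simp [ite_and, mu4, ← Finset.mul_sum, sum_sum_eq_one_of_factor hW hp2 hq, (hpX2 _ _).2]
  ring

lemma distOf_mu4_U2_Y2_X2_Q [DecidableEq A2] [DecidableEq B2]
    (hW : ∀ x1 x2 y1 y2, W x1 x2 (y1, y2) = p2 x2 y2 * q x1 y2 y1)
    (hq : ∀ x1 y2, IsPMF (q x1 y2)) (hpX1 : ∀ c, IsPMF (pX1c c))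
    (u : U2) (y2 : B2) (x2 : A2) (c : Q) :
    distOf (mu4 W pQ pX1c pU2c pX2c) (fun z => (z.2.1, z.2.2.2.2.2, z.2.2.2.1, z.1))
        (u, y2, x2, c) =
      pQ c * pU2c c u * pX2c c u x2 * p2 x2 y2 := by
  simp only [distOf, Fintype.sum_prod_type, Prod.mk.injEq]
  simp only [and_comm]
  simp [ite_and, mu4, ← Finset.mul_sum, sum_fst_eq_of_factor hW hq, ← Finset.sum_mul,
    (hpX1 _).2]

lemma distOf_mu4_U2_X1_Y2_Q [DecidableEq A1] [DecidableEq B2]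
    (hW : ∀ x1 x2 y1 y2, W x1 x2 (y1, y2) = p2 x2 y2 * q x1 y2 y1)
    (hq : ∀ x1 y2, IsPMF (q x1 y2)) (u : U2) (x1 : A1) (y2 : B2) (c : Q) :
    distOf (mu4 W pQ pX1c pU2c pX2c) (fun z => (z.2.1, z.2.2.1, z.2.2.2.2.2, z.1))
        (u, x1, y2, c) =
      pQ c * pU2c c u * (∑ x2, pX2c c u x2 * p2 x2 y2) * pX1c c x1 := by
  simp only [distOf, Fintype.sum_prod_type, Prod.mk.injEq]
  simp only [and_comm]
  simp [ite_and, mu4, ← Finset.mul_sum, sum_fst_eq_of_factor hW hq]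
  rw [Finset.mul_sum, Finset.sum_mul]
  exact Finset.sum_congr rfl fun _ _ => by ring

lemma distOf_mu4_U2_Y1_Y2_X1_Q [DecidableEq A1] [DecidableEq B1] [DecidableEq B2]
    (hW : ∀ x1 x2 y1 y2, W x1 x2 (y1, y2) = p2 x2 y2 * q x1 y2 y1)
    (u : U2) (y1 : B1) (y2 : B2) (x1 : A1) (c : Q) :
    distOf (mu4 W pQ pX1c pU2c pX2c) (fun z => (z.2.1, z.2.2.2.2.1, z.2.2.2.2.2, z.2.2.1, z.1))
        (u, y1, y2, x1, c) =
      pQ c * pX1c c x1 * pU2c c u * (∑ x2, pX2c c u x2 * p2 x2 y2) * q x1 y2 y1 := by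
  simp only [distOf, Fintype.sum_prod_type, Prod.mk.injEq]
  simp only [and_comm]
  simp [ite_and, mu4, hW]
  rw [Finset.mul_sum, Finset.sum_mul]
  exact Finset.sum_congr rfl fun _ _ => by ring

end Mu4

lemma mu4_nonneg {A1 A2 B1 B2 Q U2 : Type} [Fintype A1] [Fintype A2] [Fintype B1] [Fintype B2]
    [Fintype Q] [Fintype U2] {W : A1 → A2 → B1 × B2 → ℝ} {p2 : A2 → B2 → ℝ}
    {q : A1 → B2 → B1 → ℝ} {pQ : Q → ℝ} {pX1c : Q → A1 → ℝ} {pU2c : Q → U2 → ℝ}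
    {pX2c : Q → U2 → A2 → ℝ} (hW : ∀ x1 x2 y1 y2, W x1 x2 (y1, y2) = p2 x2 y2 * q x1 y2 y1)
    (hp2 : ∀ x2, IsPMF (p2 x2)) (hq : ∀ x1 y2, IsPMF (q x1 y2)) (hpQ : IsPMF pQ)
    (hpX1 : ∀ c, IsPMF (pX1c c)) (hpU2 : ∀ c, IsPMF (pU2c c)) (hpX2 : ∀ c u, IsPMF (pX2c c u))
    (z : Q × U2 × A1 × A2 × B1 × B2) : 0 ≤ mu4 W pQ pX1c pU2c pX2c z := by
  have := (hp2 z.2.2.2.1).1 z.2.2.2.2.2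
  have := (hq z.2.2.1 z.2.2.2.2.2).1 z.2.2.2.2.1
  have := hpQ.1 z.1
  have := (hpX1 z.1).1 z.2.2.1
  have := (hpU2 z.1).1 z.2.1
  have := (hpX2 z.1 z.2.1).1 z.2.2.2.1
  simp only [mu4, hW]
  positivity

theorem mu4_rate_bounds {A1 A2 B1 B2 Q U2 : Type} [Fintype A1] [DecidableEq A1] [Fintype A2]
    [DecidableEq A2] [Fintype B1] [DecidableEq B1] [Fintype B2] [DecidableEq B2] [Fintype Q]
    [DecidableEq Q] [Fintype U2] [DecidableEq U2] {W : A1 → A2 → B1 × B2 → ℝ}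
    {p2 : A2 → B2 → ℝ} {q : A1 → B2 → B1 → ℝ} {pQ : Q → ℝ} {pX1c : Q → A1 → ℝ}
    {pU2c : Q → U2 → ℝ} {pX2c : Q → U2 → A2 → ℝ}
    (hW : ∀ x1 x2 y1 y2, W x1 x2 (y1, y2) = p2 x2 y2 * q x1 y2 y1)
    (hp2 : ∀ x2, IsPMF (p2 x2)) (hq : ∀ x1 y2, IsPMF (q x1 y2)) (hpQ : IsPMF pQ)
    (hpX1 : ∀ c, IsPMF (pX1c c)) (hpU2 : ∀ c, IsPMF (pU2c c)) (hpX2 : ∀ c u, IsPMF (pX2c c u)) :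
    CMI (mu4 W pQ pX1c pU2c pX2c) (fun z => z.2.1) (fun z => z.2.2.2.2.1) (fun z => z.1)
        + CMI (mu4 W pQ pX1c pU2c pX2c) (fun z => z.2.2.2.1) (fun z => z.2.2.2.2.2)
            (fun z => (z.2.1, z.1))
      ≤ CMI (mu4 W pQ pX1c pU2c pX2c) (fun z => z.2.2.2.1) (fun z => z.2.2.2.2.2)
          (fun z => z.1) ∧
    CMI (mu4 W pQ pX1c pU2c pX2c) (fun z => (z.2.1, z.2.2.1)) (fun z => z.2.2.2.2.1)
          (fun z => z.1)
        + CMI (mu4 W pQ pX1c pU2c pX2c) (fun z => z.2.2.2.1) (fun z => z.2.2.2.2.2)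
            (fun z => (z.2.1, z.1))
      ≤ CMI (mu4 W pQ pX1c pU2c pX2c) (fun z => z.2.2.1) (fun z => z.2.2.2.2.1) (fun z => z.1)
        + CMI (mu4 W pQ pX1c pU2c pX2c) (fun z => z.2.2.2.1) (fun z => z.2.2.2.2.2)
            (fun z => z.1) := by
  have hμ := mu4_nonneg hW hp2 hq hpQ hpX1 hpU2 hpX2
  have hQU2 : ∀ u c, 0 ≤ pQ c * pU2c c u := fun u c => mul_nonneg (hpQ.1 c) ((hpU2 c).1 u)
  have hY2 : ∀ c u y2, 0 ≤ ∑ x2, pX2c c u x2 * p2 x2 y2 := fun c u y2 =>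
    Finset.sum_nonneg fun x2 _ => mul_nonneg ((hpX2 c u).1 x2) ((hp2 x2).1 y2)
  refine weakInterference_bounds hμ ?_ ?_ ?_ ?_
  · exact CMI_eq_zero_of_factor hμ (fun u (c : A2 × Q) => pQ c.2 * pU2c c.2 u * pX2c c.2 u c.1)
      (fun y2 c => p2 c.1 y2) (fun u c => mul_nonneg (hQU2 u c.2) ((hpX2 _ _).1 _))
      (fun y2 c => (hp2 _).1 _) fun u y2 c => distOf_mu4_U2_Y2_X2_Q hW hq hpX1 u y2 c.1 c.2
  · exact CMI_eq_zero_of_factor hμ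
      (fun u (c : B2 × A1 × Q) => pQ c.2.2 * pX1c c.2.2 c.2.1 * pU2c c.2.2 u *
        ∑ x2, pX2c c.2.2 u x2 * p2 x2 c.1)
      (fun y1 c => q c.2.1 c.1 y1)
      (fun u c => mul_nonneg (mul_nonneg (mul_nonneg (hpQ.1 _) ((hpX1 _).1 _)) ((hpU2 _).1 _))
        (hY2 _ _ _))
      (fun y1 c => (hq _ _).1 _) fun u y1 c => distOf_mu4_U2_Y1_Y2_X1_Q hW u y1 c.1 c.2.1 c.2.2
  · exact CMI_eq_zero_of_factor hμ (fun u c => pQ c * pU2c c u) (fun x1 c => pX1c c x1)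
      hQU2 (fun x1 c => (hpX1 _).1 _) (distOf_mu4_U2_X1_Q hW hp2 hq hpX2)
  · exact CMI_eq_zero_of_factor hμ
      (fun u (c : B2 × Q) => pQ c.2 * pU2c c.2 u * ∑ x2, pX2c c.2 u x2 * p2 x2 c.1)
      (fun x1 c => pX1c c.2 x1) (fun u c => mul_nonneg (hQU2 u c.2) (hY2 _ _ _))
      (fun x1 c => (hpX1 _).1 _) fun u x1 c => distOf_mu4_U2_X1_Y2_Q hW hq u x1 c.1 c.2

/- Time sharing on `Q × Bool`: with weight `t` (on `true`) the original scheme is used; otherwise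
`U2` is the constant `u₀` and `X2` keeps its conditional law given `Q`. -/

def timeShareQ {Q : Type} (pQ : Q → ℝ) (t : ℝ) : Q × Bool → ℝ :=
  fun c => pQ c.1 * if c.2 then t else 1 - t

def timeShareX1 {Q A1 : Type} (pX1c : Q → A1 → ℝ) : Q × Bool → A1 → ℝ := fun c => pX1c c.1

def timeShareU2 {Q U2 : Type} [DecidableEq U2] (pU2c : Q → U2 → ℝ) (u₀ : U2) :
    Q × Bool → U2 → ℝ :=
  fun c u => if c.2 then pU2c c.1 u else if u = u₀ then 1 else 0

def timeShareX2 {Q U2 A2 : Type} [Fintype U2] (pU2c : Q → U2 → ℝ) (pX2c : Q → U2 → A2 → ℝ) :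
    Q × Bool → U2 → A2 → ℝ :=
  fun c u x2 => if c.2 then pX2c c.1 u x2 else ∑ u', pU2c c.1 u' * pX2c c.1 u' x2

section TimeSharing

set_option synthInstance.maxSize 256

variable {A1 A2 B1 B2 Q U2 : Type} [Fintype A1] [DecidableEq A1] [Fintype A2] [DecidableEq A2]
  [Fintype B1] [DecidableEq B1] [Fintype B2] [DecidableEq B2]
  [Fintype Q] [DecidableEq Q] [Fintype U2] [DecidableEq U2]
  (W : A1 → A2 → B1 × B2 → ℝ) (pQ : Q → ℝ) (pX1c : Q → A1 → ℝ) (pU2c : Q → U2 → ℝ)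
  (pX2c : Q → U2 → A2 → ℝ) (t : ℝ) (u₀ : U2)

lemma mu4_timeShare :
    mu4 W (timeShareQ pQ t) (timeShareX1 pX1c) (timeShareU2 pU2c u₀) (timeShareX2 pU2c pX2c) =
      fun ω => distOf (fun z => t * mu4 W pQ pX1c pU2c pX2c z) (fun z => ((z.1, true), z.2)) ω +
        distOf (fun z => (1 - t) * mu4 W pQ pX1c pU2c pX2c z)
          (fun z => ((z.1, false), u₀, z.2.2)) ω := by
  funext ⟨⟨c, b⟩, u, x1, x2, y1, y2⟩
  simp only [distOf, Fintype.sum_prod_type, Prod.mk.injEq]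
  cases b
  · by_cases hu : u = u₀
    · subst hu
      simp [ite_and, mu4, timeShareQ, timeShareX1, timeShareU2, timeShareX2, Finset.mul_sum,
        Finset.sum_mul]
      exact Finset.sum_congr rfl fun _ _ => by ring
    · simp [hu, Ne.symm hu, mu4, timeShareU2]
  · simp [ite_and, mu4, timeShareQ, timeShareX1, timeShareU2, timeShareX2]
    ring

lemma CMI_mu4_timeShare_X1_Y1 :
    CMI (mu4 W (timeShareQ pQ t) (timeShareX1 pX1c) (timeShareU2 pU2c u₀) (timeShareX2 pU2c pX2c))
        (fun z => z.2.2.1) (fun z => z.2.2.2.2.1) (fun z => (z.2.1, z.1)) =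
      t * CMI (mu4 W pQ pX1c pU2c pX2c) (fun z => z.2.2.1) (fun z => z.2.2.2.2.1)
          (fun z => (z.2.1, z.1))
        + (1 - t) * CMI (mu4 W pQ pX1c pU2c pX2c) (fun z => z.2.2.1) (fun z => z.2.2.2.2.1)
          (fun z => z.1) := by
  rw [mu4_timeShare, CMI_distOf_add_distOf _ _ _ _ _ _ _ (by simp), CMI_mul_left, CMI_mul_left]
  congr 2 <;> exact CMI_congr (fun _ _ => Iff.rfl) (fun _ _ => Iff.rfl) (by simp)

lemma CMI_mu4_timeShare_U2_Y1 :
    CMI (mu4 W (timeShareQ pQ t) (timeShareX1 pX1c) (timeShareU2 pU2c u₀) (timeShareX2 pU2c pX2c))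
        (fun z => z.2.1) (fun z => z.2.2.2.2.1) (fun z => z.1) =
      t * CMI (mu4 W pQ pX1c pU2c pX2c) (fun z => z.2.1) (fun z => z.2.2.2.2.1) (fun z => z.1) := by
  rw [mu4_timeShare, CMI_distOf_add_distOf _ _ _ _ _ _ _ (by simp), CMI_mul_left, CMI_mul_left]
  simp only [Function.comp_def, CMI_const_left, mul_zero, add_zero]
  congr 1
  exact CMI_congr (fun _ _ => Iff.rfl) (fun _ _ => Iff.rfl) (by simp)

lemma CMI_mu4_timeShare_X2_Y2 :
    CMI (mu4 W (timeShareQ pQ t) (timeShareX1 pX1c) (timeShareU2 pU2c u₀) (timeShareX2 pU2c pX2c))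
        (fun z => z.2.2.2.1) (fun z => z.2.2.2.2.2) (fun z => (z.2.1, z.1)) =
      t * CMI (mu4 W pQ pX1c pU2c pX2c) (fun z => z.2.2.2.1) (fun z => z.2.2.2.2.2)
          (fun z => (z.2.1, z.1))
        + (1 - t) * CMI (mu4 W pQ pX1c pU2c pX2c) (fun z => z.2.2.2.1) (fun z => z.2.2.2.2.2)
          (fun z => z.1) := by
  rw [mu4_timeShare, CMI_distOf_add_distOf _ _ _ _ _ _ _ (by simp), CMI_mul_left, CMI_mul_left]
  congr 2 <;> exact CMI_congr (fun _ _ => Iff.rfl) (fun _ _ => Iff.rfl) (by simp)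

end TimeSharing

lemma IsPMF.nonempty {α : Type*} [Fintype α] {p : α → ℝ} (hp : IsPMF p) : Nonempty α := by
  by_contra h
  have := hp.2
  simp [not_nonempty_iff.1 h] at this

lemma isPMF_timeShareQ {Q : Type} [Fintype Q] {pQ : Q → ℝ} (hpQ : IsPMF pQ) {t : ℝ}
    (ht₀ : 0 ≤ t) (ht₁ : t ≤ 1) : IsPMF (timeShareQ pQ t) := by
  refine ⟨fun c => mul_nonneg (hpQ.1 c.1) (by split_ifs <;> linarith), ?_⟩
  simp [timeShareQ, Fintype.sum_prod_type, ← mul_add, hpQ.2]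

lemma isPMF_timeShareU2 {Q U2 : Type} [Fintype U2] [DecidableEq U2] {pU2c : Q → U2 → ℝ}
    (hpU2 : ∀ c, IsPMF (pU2c c)) (u₀ : U2) (c : Q × Bool) : IsPMF (timeShareU2 pU2c u₀ c) := by
  rcases c with ⟨c, _ | _⟩ <;> unfold timeShareU2
  · refine ⟨fun u => ?_, by simp⟩
    simp only [Bool.false_eq_true, if_false]
    split_ifs <;> norm_num
  · simpa using hpU2 c

lemma isPMF_timeShareX2 {Q U2 A2 : Type} [Fintype U2] [Fintype A2] {pU2c : Q → U2 → ℝ}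
    {pX2c : Q → U2 → A2 → ℝ} (hpU2 : ∀ c, IsPMF (pU2c c)) (hpX2 : ∀ c u, IsPMF (pX2c c u))
    (c : Q × Bool) (u : U2) : IsPMF (timeShareX2 pU2c pX2c c u) := by
  rcases c with ⟨c, _ | _⟩ <;> unfold timeShareX2
  · refine ⟨fun x2 => Finset.sum_nonneg fun u' _ => mul_nonneg ((hpU2 c).1 u') ((hpX2 c u').1 x2),
      ?_⟩
    simp only [Bool.false_eq_true, if_false]
    rw [Finset.sum_comm]
    simp [← Finset.mul_sum, (hpX2 _ _).2, (hpU2 c).2]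
  · simpa using hpX2 c u

/-- `t = 1` when `r₂` already meets the second bound; otherwise the weight making it tight. -/
lemma exists_timeShare_weight {r₁ r₂ a a' b d e : ℝ} (h₁ : r₁ ≤ a) (h₂ : r₂ ≤ b)
    (hsum : r₁ + r₂ ≤ e + a + d) (hsd : e + a + d ≤ a' + b) :
    ∃ t, 0 ≤ t ∧ t ≤ 1 ∧ r₁ ≤ t * a + (1 - t) * a' ∧ r₂ ≤ t * e + (t * d + (1 - t) * b) := by
  by_cases hr : r₂ ≤ e + d
  · exact ⟨1, zero_le_one, le_rfl, by linarith, by linarith⟩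
  have hgap : 0 < b - (e + d) := by linarith
  set t := (b - r₂) / (b - (e + d))
  have ht : t * (b - (e + d)) = b - r₂ := div_mul_cancel₀ _ hgap.ne'
  have ht₁ : t ≤ 1 := (div_le_one hgap).2 (by linarith)
  refine ⟨t, div_nonneg (by linarith) hgap.le, ht₁, ?_, by linarith⟩
  nlinarith [mul_nonneg (sub_nonneg.2 ht₁) (sub_nonneg.2 hsd)]

theorem regionE_subset_regionC {A1 A2 B1 B2 : Type} [Fintype A1] [DecidableEq A1] [Fintype A2]
    [DecidableEq A2] [Fintype B1] [DecidableEq B1] [Fintype B2] [DecidableEq B2]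
    {W : A1 → A2 → B1 × B2 → ℝ} (hW : WeakZ W) : regionE W ⊆ regionC W := by
  obtain ⟨p2, q, hp2, hq, hWf⟩ := hW
  rintro r ⟨Q, U2, _, _, _, _, pQ, pX1c, pU2c, pX2c, hpQ, hpX1, hpU2, hpX2, hr1, hr2, hA, hr⟩
  obtain ⟨hED, hSD⟩ := mu4_rate_bounds hWf hp2 hq hpQ hpX1 hpU2 hpX2
  refine ⟨Q, U2, _, _, _, _, pQ, pX1c, pU2c, pX2c, hpQ, hpX1, hpU2, hpX2, hr1, hr2, hA,
    by linarith, ?_⟩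
  rw [CMI_pair_left]
  linarith

theorem regionC_subset_regionE {A1 A2 B1 B2 : Type} [Fintype A1] [DecidableEq A1] [Fintype A2]
    [DecidableEq A2] [Fintype B1] [DecidableEq B1] [Fintype B2] [DecidableEq B2]
    {W : A1 → A2 → B1 × B2 → ℝ} (hW : WeakZ W) : regionC W ⊆ regionE W := by
  obtain ⟨p2, q, hp2, hq, hWf⟩ := hW
  rintro r ⟨Q, U2, _, _, _, _, pQ, pX1c, pU2c, pX2c, hpQ, hpX1, hpU2, hpX2, hr1, hr2, hA, hB, hS⟩
  obtain ⟨-, hSD⟩ := mu4_rate_bounds hWf hp2 hq hpQ hpX1 hpU2 hpX2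
  rw [CMI_pair_left] at hS hSD
  obtain ⟨t, ht₀, ht₁, hr1', hr2'⟩ := exists_timeShare_weight hA hB hS hSD
  obtain ⟨u₀⟩ := (hpU2 hpQ.nonempty.some).nonempty
  refine ⟨Q × Bool, U2, inferInstance, inferInstance, inferInstance, inferInstance,
    timeShareQ pQ t, timeShareX1 pX1c, timeShareU2 pU2c u₀, timeShareX2 pU2c pX2c,
    isPMF_timeShareQ hpQ ht₀ ht₁, fun c => hpX1 c.1, isPMF_timeShareU2 hpU2 u₀,
    isPMF_timeShareX2 hpU2 hpX2, hr1, hr2, ?_, ?_⟩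
  · rwa [CMI_mu4_timeShare_X1_Y1]
  · rwa [CMI_mu4_timeShare_U2_Y1, CMI_mu4_timeShare_X2_Y2]

theorem regionC_eq_regionE_general {A1 A2 B1 B2 : Type} [Fintype A1] [DecidableEq A1] [Fintype A2] [DecidableEq A2]
    [Fintype B1] [DecidableEq B1] [Fintype B2] [DecidableEq B2]
    (W : A1 → A2 → B1 × B2 → ℝ) (hweak : WeakZ W) :
    regionC W = regionE W :=
  (regionC_subset_regionE hweak).antisymm (regionE_subset_regionC hweak)

/-- For a DMZIC with weak interference, the regions `C` and `E` coincide. -/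
theorem regionC_eq_regionE {A1 A2 B1 B2 : Type} [Fintype A1] [DecidableEq A1] [Fintype A2] [DecidableEq A2]
    [Fintype B1] [DecidableEq B1] [Fintype B2] [DecidableEq B2]
    (W : A1 → A2 → B1 × B2 → ℝ) (hW : IsChannel W) (hweak : WeakZ W) :
    regionC W = regionE W :=
  regionC_eq_regionE_general W hweak

end IT
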